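/- Let F be an induced-2C2-saturated family of subsets of [n] that contains the maximal chain C♭, and let k = |F \ C♭| be the number of non-chain elements of F. Then n − 1 ≤ 2k. -/

import Mathlib

/-!
Count every non-chain member `W` of `F` twice, once at its least missing element and once at its
largest element, and let `w p` be the number of counts at `p` (elements are `0`-indexed), so
that `∑ w p ≤ 2k`. Freeness against the chain pairs `C_{x+1} ⊂ C_{x+2}` shows that if `V ⊂ V'`
in `F`, no element of `V` exceeds an element missing from `V'` by more than one. Now let
`p + 1 < n` with `w p = 0`. Then the shackle `shackle n (p + 1) = [0,p) ∪ {p+1}` is missing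
from `F`, and the copy of `2C₂` it creates yields, through this window property, a non-chain
member with least missing element `p + 1` and enough further counts at `p + 1`, `p + 2` that
`w p + ⋯ + w (p + i - 1) ≥ i` for some `i ≤ 3`. Chaining these windows gives `∑ w p ≥ n - 1`.
-/

/-- `F ⊆ 𝒫([n])` contains an induced copy of the poset `2C₂`: four sets
`A ⊊ A'`, `B ⊊ B'`, with each of `A, A'` incomparable to each of `B, B'`. -/
def Contains2C2 {n : ℕ} (F : Finset (Finset (Fin n))) : Prop :=
  ∃ A A' B B' : Finset (Fin n), A ∈ F ∧ A' ∈ F ∧ B ∈ F ∧ B' ∈ F ∧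
    A ⊂ A' ∧ B ⊂ B' ∧
    ¬ A ⊆ B ∧ ¬ B ⊆ A ∧ ¬ A ⊆ B' ∧ ¬ B' ⊆ A ∧
    ¬ A' ⊆ B ∧ ¬ B ⊆ A' ∧ ¬ A' ⊆ B' ∧ ¬ B' ⊆ A'

/-- `F` is induced-`2C₂`-saturated: it is induced-`2C₂`-free, and adding any
missing set creates an induced copy of `2C₂`. -/
def Saturated2C2 {n : ℕ} (F : Finset (Finset (Fin n))) : Prop :=
  ¬ Contains2C2 F ∧ ∀ S : Finset (Fin n), S ∉ F → Contains2C2 (insert S F)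

/-- The chain element `C_i = [i] = {1,…,i}` (0-indexed: `{x : Fin n | x < i}`). -/
def chainC (n i : ℕ) : Finset (Fin n) := Finset.univ.filter (fun x => (x : ℕ) < i)

/-- The maximal chain `C♭ = {C_0, C_1, …, C_n}`. -/
def Cflat (n : ℕ) : Finset (Finset (Fin n)) := (Finset.range (n + 1)).image (chainC n)

/-- The shackle `S_i = [i-1] ∪ {i+1}` (1-indexed elements; 0-indexed:
`{x : Fin n | x + 1 < i or x = i}`), meaningful for `1 ≤ i ≤ n-1`. -/
def shackle (n i : ℕ) : Finset (Fin n) :=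
  Finset.univ.filter (fun x => (x : ℕ) + 1 < i ∨ (x : ℕ) = i)

/-- Two sets are comparable if one contains the other. -/
def Comp {n : ℕ} (A B : Finset (Fin n)) : Prop := A ⊆ B ∨ B ⊆ A

/-- Two sets are incomparable if neither contains the other. -/
def Incomp {n : ℕ} (A B : Finset (Fin n)) : Prop := ¬ A ⊆ B ∧ ¬ B ⊆ A

open Finset

variable {n : ℕ}

@[simp] lemma mem_chainC {i : ℕ} {x : Fin n} : x ∈ chainC n i ↔ (x : ℕ) < i := by
  simp [chainC]

@[simp] lemma mem_shackle {i : ℕ} {x : Fin n} :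
    x ∈ shackle n i ↔ (x : ℕ) + 1 < i ∨ (x : ℕ) = i := by
  simp [shackle]

lemma chainC_mem_Cflat {i : ℕ} (h : i ≤ n) : chainC n i ∈ Cflat n :=
  mem_image_of_mem _ (mem_range.2 (by omega))

lemma notMem_Cflat_of_lt {W : Finset (Fin n)} {x y : Fin n} (hx : x ∈ W) (hy : y ∉ W)
    (hyx : y < x) : W ∉ Cflat n := by
  intro hW
  obtain ⟨i, -, rfl⟩ := mem_image.1 hW
  simp only [mem_chainC] at hx hy
  omega

lemma eq_chainC_of_mem_Cflat {W : Finset (Fin n)} (hW : W ∈ Cflat n) {x y : Fin n}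
    (hx : x ∈ W) (hy : y ∉ W) (hxy : (y : ℕ) = x + 1) : W = chainC n y := by
  obtain ⟨i, -, rfl⟩ := mem_image.1 hW
  simp only [mem_chainC] at hx hy
  congr 1
  omega

lemma sum_card_filter_le_card {ι α : Type*} [DecidableEq α] (t : Finset ι) (s : Finset α)
    (r : ι → α → Prop) [∀ i, DecidablePred (r i)]
    (huniq : ∀ a ∈ s, ∀ i j, r i a → r j a → i = j) :
    ∑ i ∈ t, #{a ∈ s | r i a} ≤ #s := by
  rw [← card_biUnion]
  · exact card_le_card (biUnion_subset.2 fun _ _ => filter_subset _ _)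
  · intro i _ j _ hij
    exact disjoint_filter.2 fun a ha hi hj => hij (huniq a ha i j hi hj)

lemma le_sum_range_of_forall_window (c : ℕ → ℕ) {m d : ℕ}
    (h : ∀ p < m, ∃ i, 0 < i ∧ i ≤ d + 1 ∧ i ≤ ∑ q ∈ Ico p (p + i), c q) :
    m ≤ ∑ q ∈ range (m + d), c q := by
  suffices key : ∀ k p, m - p ≤ k → m - p ≤ ∑ q ∈ Ico p (m + d), c q by
    simpa only [Nat.sub_zero, Finset.range_eq_Ico] using key m 0 (Nat.sub_le m 0)
  intro k
  induction k with
  | zero => intro p hp; omega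
  | succ k ih =>
    intro p hp
    rcases le_or_gt m p with hmp | hpm
    · omega
    obtain ⟨i, hi, hid, hwindow⟩ := h p hpm
    rw [← sum_Ico_consecutive c (Nat.le_add_right p i) (by omega : p + i ≤ m + d)]
    have := ih (p + i) (by omega)
    omega

section Saturation

variable {F : Finset (Finset (Fin n))}

lemma le_succ_of_ssubset (hfree : ¬ Contains2C2 F) (hC : Cflat n ⊆ F)
    {V V' : Finset (Fin n)} (hV : V ∈ F) (hV' : V' ∈ F) (hVV' : V ⊂ V')
    {x z : Fin n} (hx : x ∉ V') (hz : z ∈ V) : (z : ℕ) ≤ x + 1 := by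
  by_contra! hzx
  have hxV : x ∉ V := fun h => hx (hVV'.subset h)
  have hzV' : z ∈ V' := hVV'.subset hz
  have hchain : chainC n (x + 1) ⊂ chainC n (x + 2) :=
    (ssubset_iff_of_subset fun y => by simp; omega).2 ⟨⟨x + 1, by omega⟩, by simp, by simp⟩
  exact hfree ⟨_, _, V, V', hC (chainC_mem_Cflat (by omega)), hC (chainC_mem_Cflat (by omega)),
    hV, hV', hchain, hVV',
    not_subset.2 ⟨x, by simp, hxV⟩, not_subset.2 ⟨z, hz, by simp; omega⟩,
    not_subset.2 ⟨x, by simp, hx⟩, not_subset.2 ⟨z, hzV', by simp; omega⟩,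
    not_subset.2 ⟨x, by simp, hxV⟩, not_subset.2 ⟨z, hz, by simp; omega⟩,
    not_subset.2 ⟨x, by simp, hx⟩, not_subset.2 ⟨z, hzV', by simp; omega⟩⟩

lemma exists_comparable_of_contains2C2_insert (hfree : ¬ Contains2C2 F) {S : Finset (Fin n)}
    (hS : Contains2C2 (insert S F)) :
    ∃ R ∈ F, ∃ V ∈ F, ∃ V' ∈ F, (R ⊂ S ∨ S ⊂ R) ∧ V ⊂ V' ∧
      Incomp V S ∧ Incomp V' S ∧ Incomp R V ∧ Incomp R V' := by
  obtain ⟨A, A', B, B', hA, hA', hB, hB', hAA', hBB',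
    hAB, hBA, hAB', hB'A, hA'B, hBA', hA'B', hB'A'⟩ := hS
  simp only [mem_insert] at hA hA' hB hB'
  have ne_of_not_subset {X Y : Finset (Fin n)} (h : ¬ X ⊆ Y) : X ≠ Y :=
    fun e => h (e ▸ subset_rfl)
  rcases hA with rfl | hA
  · exact ⟨A', hA'.resolve_left hAA'.ne', B, hB.resolve_left (ne_of_not_subset hBA),
      B', hB'.resolve_left (ne_of_not_subset hB'A), Or.inr hAA', hBB',
      ⟨hBA, hAB⟩, ⟨hB'A, hAB'⟩, ⟨hA'B, hBA'⟩, ⟨hA'B', hB'A'⟩⟩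
  rcases hA' with rfl | hA'
  · exact ⟨A, hA, B, hB.resolve_left (ne_of_not_subset hBA'),
      B', hB'.resolve_left (ne_of_not_subset hB'A'), Or.inl hAA', hBB',
      ⟨hBA', hA'B⟩, ⟨hB'A', hA'B'⟩, ⟨hAB, hBA⟩, ⟨hAB', hB'A⟩⟩
  rcases hB with rfl | hB
  · exact ⟨B', hB'.resolve_left hBB'.ne', A, hA, A', hA', Or.inr hBB', hAA',
      ⟨hAB, hBA⟩, ⟨hA'B, hBA'⟩, ⟨hB'A, hAB'⟩, ⟨hB'A', hA'B'⟩⟩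
  rcases hB' with rfl | hB'
  · exact ⟨B, hB, A, hA, A', hA', Or.inl hBB', hAA',
      ⟨hAB', hB'A⟩, ⟨hA'B', hB'A'⟩, ⟨hBA, hAB⟩, ⟨hBA', hA'B⟩⟩
  exact absurd ⟨A, A', B, B', hA, hA', hB, hB', hAA', hBB',
    hAB, hBA, hAB', hB'A, hA'B, hBA', hA'B', hB'A'⟩ hfree

end Saturation

section NonChain

variable {F : Finset (Finset (Fin n))} {p : ℕ} {W : Finset (Fin n)}

def nonChainByGap (F : Finset (Finset (Fin n))) (p : ℕ) : Finset (Finset (Fin n)) :=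
  {W ∈ F \ Cflat n | (∀ x : Fin n, (x : ℕ) < p → x ∈ W) ∧ ∃ x ∉ W, (x : ℕ) = p}

def nonChainByMax (F : Finset (Finset (Fin n))) (p : ℕ) : Finset (Finset (Fin n)) :=
  {W ∈ F \ Cflat n | (∀ x ∈ W, (x : ℕ) ≤ p) ∧ ∃ x ∈ W, (x : ℕ) = p}

def nonChainWeight (F : Finset (Finset (Fin n))) (p : ℕ) : ℕ :=
  #(nonChainByGap F p) + #(nonChainByMax F p)

lemma mem_nonChainByGap : W ∈ nonChainByGap F p ↔
    (W ∈ F ∧ W ∉ Cflat n) ∧ (∀ x : Fin n, (x : ℕ) < p → x ∈ W) ∧ ∃ x ∉ W, (x : ℕ) = p := by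
  rw [nonChainByGap, mem_filter, mem_sdiff]

lemma mem_nonChainByMax : W ∈ nonChainByMax F p ↔
    (W ∈ F ∧ W ∉ Cflat n) ∧ (∀ x ∈ W, (x : ℕ) ≤ p) ∧ ∃ x ∈ W, (x : ℕ) = p := by
  rw [nonChainByMax, mem_filter, mem_sdiff]

lemma sum_nonChainWeight_le (N : ℕ) :
    ∑ p ∈ range N, nonChainWeight F p ≤ 2 * #(F \ Cflat n) := by
  simp only [nonChainWeight, sum_add_distrib, two_mul]
  apply add_le_add
  · refine sum_card_filter_le_card _ _ _ fun W _ p q ⟨hp, x, hx, hxp⟩ ⟨hq, y, hy, hyq⟩ => ?_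
    exact le_antisymm (not_lt.1 fun h => hy (hp y (by omega)))
      (not_lt.1 fun h => hx (hq x (by omega)))
  · refine sum_card_filter_le_card _ _ _ fun W _ p q ⟨hp, x, hx, hxp⟩ ⟨hq, y, hy, hyq⟩ => ?_
    have := hp y hy
    have := hq x hx
    omega

lemma shackle_notMem_Cflat (hp : p + 1 < n) : shackle n (p + 1) ∉ Cflat n :=
  notMem_Cflat_of_lt (x := ⟨p + 1, hp⟩) (y := ⟨p, by omega⟩) (by simp) (by simp) (by simp)

lemma shackle_mem_nonChainByGap (hp : p + 1 < n) (hS : shackle n (p + 1) ∈ F) :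
    shackle n (p + 1) ∈ nonChainByGap F p :=
  mem_nonChainByGap.2 ⟨⟨hS, shackle_notMem_Cflat hp⟩, fun x hx => by simp; omega,
    ⟨p, by omega⟩, by simp, rfl⟩

lemma shackle_mem_nonChainByMax (hp : p + 1 < n) (hS : shackle n (p + 1) ∈ F) :
    shackle n (p + 1) ∈ nonChainByMax F (p + 1) :=
  mem_nonChainByMax.2 ⟨⟨hS, shackle_notMem_Cflat hp⟩, fun x hx => by simp at hx; omega,
    ⟨p + 1, hp⟩, by simp, rfl⟩

lemma exists_gt_of_nonChainByMax_eq_empty (hmax : nonChainByMax F p = ∅) {V : Finset (Fin n)}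
    (hV : V ∈ F) {x y : Fin n} (hx : x ∉ V) (hxp : (x : ℕ) < p) (hy : y ∈ V) (hpy : p ≤ y) :
    ∃ z ∈ V, p < (z : ℕ) := by
  by_contra! h
  have hmem : V ∈ nonChainByMax F p :=
    mem_nonChainByMax.2 ⟨⟨hV, notMem_Cflat_of_lt hy hx (by have := h y hy; omega)⟩, h, y, hy,
      by have := h y hy; omega⟩
  simp [hmax] at hmem

end NonChain

section Shackle

variable {F : Finset (Finset (Fin n))} {p : ℕ} {V V' : Finset (Fin n)}

lemma mem_nonChainByGap_succ_of_ssubset (hfree : ¬ Contains2C2 F) (hC : Cflat n ⊆ F)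
    (hmax : nonChainByMax F p = ∅) (hV : V ∈ F) (hV' : V' ∈ F) (hVV' : V ⊂ V')
    (hVS : ¬ V ⊆ shackle n (p + 1)) (hSV' : ¬ shackle n (p + 1) ⊆ V') :
    V' ∈ nonChainByGap F (p + 1) := by
  have window {x z : Fin n} (hx : x ∉ V') (hz : z ∈ V) : (z : ℕ) ≤ x + 1 :=
    le_succ_of_ssubset hfree hC hV hV' hVV' hx hz
  obtain ⟨y, hyV, hyS⟩ := not_subset.1 hVS
  simp only [mem_shackle, not_or] at hyS
  have hprefix : ∀ x : Fin n, (x : ℕ) < p → x ∈ V' := by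
    intro x hxp
    by_contra hx
    obtain ⟨z, hz, hpz⟩ := exists_gt_of_nonChainByMax_eq_empty hmax hV
      (fun h => hx (hVV'.subset h)) hxp hyV (by omega)
    have := window hx hz
    omega
  obtain ⟨e, heS, heV'⟩ := not_subset.1 hSV'
  have he : (e : ℕ) = p + 1 := by
    have := mt (hprefix e) heV'
    simp only [mem_shackle] at heS
    omega
  have hprefix' : ∀ x : Fin n, (x : ℕ) < p + 1 → x ∈ V' := by
    intro x hxp
    by_contra hx
    have := window hx hyV
    have := ne_of_mem_of_not_mem (hVV'.subset hyV) hx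
    have := mt (hprefix x) hx
    omega
  refine mem_nonChainByGap.2 ⟨⟨hV', ?_⟩, hprefix', e, heV', he⟩
  suffices ∃ z ∈ V', p + 1 < (z : ℕ) by
    obtain ⟨z, hz, hpz⟩ := this
    exact notMem_Cflat_of_lt hz heV' (by omega)
  by_contra! htop
  obtain ⟨x, hxV', hxV⟩ := exists_of_ssubset hVV'
  have := htop x hxV'
  have := htop y (hVV'.subset hyV)
  have := ne_of_mem_of_not_mem hxV' heV'
  have := ne_of_mem_of_not_mem hyV hxV
  obtain ⟨z, hz, hpz⟩ := exists_gt_of_nonChainByMax_eq_empty hmax hV hxV (by omega) hyV (by omega)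
  have := htop z (hVV'.subset hz)
  have := ne_of_mem_of_not_mem (hVV'.subset hz) heV'
  omega

lemma mem_nonChainByGap_or_mem_nonChainByMax_of_comparable (hp : p + 1 < n)
    {R : Finset (Fin n)} (hR : R ∈ F) (hRS : R ⊂ shackle n (p + 1) ∨ shackle n (p + 1) ⊂ R)
    (hRC : Incomp R (chainC n (p + 1))) :
    R ∈ nonChainByGap F p ∨ R ∈ nonChainByMax F (p + 1) := by
  rcases hRS with hRS | hSR
  · obtain ⟨r, hrR, hrC⟩ := not_subset.1 hRC.1
    have hr := hRS.subset hrR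
    have hpR : (⟨p, by omega⟩ : Fin n) ∉ R := fun h => by simpa using hRS.subset h
    simp only [mem_chainC, mem_shackle] at hrC hr
    have hRC : R ∉ Cflat n := notMem_Cflat_of_lt hrR hpR (show p < (r : ℕ) by omega)
    refine Or.inr (mem_nonChainByMax.2 ⟨⟨hR, hRC⟩, fun x hx => ?_, r, hrR, by omega⟩)
    have := hRS.subset hx
    simp only [mem_shackle] at this
    omega
  · obtain ⟨v, hvC, hvR⟩ := not_subset.1 hRC.2
    have hprefix : ∀ x : Fin n, (x : ℕ) < p → x ∈ R := fun x hx => hSR.subset (by simp; omega)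
    have hv : (v : ℕ) = p := by
      have := mt (hprefix v) hvR
      simp only [mem_chainC] at hvC
      omega
    refine Or.inl (mem_nonChainByGap.2 ⟨⟨hR, notMem_Cflat_of_lt (x := ⟨p + 1, hp⟩)
      (hSR.subset (by simp)) hvR (show (v : ℕ) < p + 1 by omega)⟩, hprefix, v, hvR, hv⟩)

lemma mem_nonChainByMax_add_two_of_ssubset (hfree : ¬ Contains2C2 F) (hC : Cflat n ⊆ F)
    (hmax : nonChainByMax F p = ∅) (hV : V ∈ F) (hV' : V' ∈ F) (hVV' : V ⊂ V') {e x y : Fin n}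
    (he : e ∉ V') (hep : (e : ℕ) = p + 1) (hx : x ∉ V) (hxp : (x : ℕ) < p) (hy : y ∈ V)
    (hpy : p ≤ y) : V ∈ nonChainByMax F (p + 2) := by
  have window {w : Fin n} (hw : w ∈ V) : (w : ℕ) ≤ p + 2 := by
    have := le_succ_of_ssubset hfree hC hV hV' hVV' he hw
    omega
  obtain ⟨z, hz, hpz⟩ := exists_gt_of_nonChainByMax_eq_empty hmax hV hx hxp hy hpy
  have := ne_of_mem_of_not_mem (hVV'.subset hz) he
  have := window hz
  exact mem_nonChainByMax.2 ⟨⟨hV, notMem_Cflat_of_lt hz hx (by omega)⟩, fun w hw => window hw,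
    z, hz, by omega⟩

lemma exists_mem_nonChainByGap_succ (hF : Saturated2C2 F) (hC : Cflat n ⊆ F) (hp : p + 1 < n)
    (hmax : nonChainByMax F p = ∅) (hS : shackle n (p + 1) ∉ F) :
    ∃ V' ∈ nonChainByGap F (p + 1), (nonChainByGap F p).Nonempty ∨
      (∃ V ∈ nonChainByGap F (p + 1), V ≠ V') ∨ (nonChainByMax F (p + 1)).Nonempty ∨
      ∃ Q ∈ nonChainByMax F (p + 2), Q ≠ V' := by
  obtain ⟨R, hR, V, hV, V', hV', hRS, hVV', ⟨hVS, -⟩, ⟨-, hSV'⟩, hRV, -⟩ :=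
    exists_comparable_of_contains2C2_insert hF.1 (hF.2 _ hS)
  have hV'gap := mem_nonChainByGap_succ_of_ssubset hF.1 hC hmax hV hV' hVV' hVS hSV'
  obtain ⟨-, -, e, heV', he⟩ := mem_nonChainByGap.1 hV'gap
  have heV : e ∉ V := fun h => heV' (hVV'.subset h)
  obtain ⟨y, hyV, hyS⟩ := not_subset.1 hVS
  simp only [mem_shackle, not_or] at hyS
  refine ⟨V', hV'gap, ?_⟩
  by_cases hprefix : ∀ x : Fin n, (x : ℕ) < p → x ∈ V
  · obtain ⟨ep, hep⟩ : ∃ ep : Fin n, (ep : ℕ) = p := ⟨⟨p, by omega⟩, rfl⟩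
    by_cases hpV : ep ∈ V
    · by_cases hVC : V ∈ Cflat n
      · have hVeq : V = chainC n (p + 1) := by
          rw [eq_chainC_of_mem_Cflat hVC hpV heV (by omega), he]
        rcases mem_nonChainByGap_or_mem_nonChainByMax_of_comparable hp hR hRS (hVeq ▸ hRV)
          with h | h
        · exact Or.inl ⟨R, h⟩
        · exact Or.inr (Or.inr (Or.inl ⟨R, h⟩))
      · have hprefixV : ∀ x : Fin n, (x : ℕ) < p + 1 → x ∈ V := fun x hx => by
          by_cases hxp : (x : ℕ) < p
          · exact hprefix x hxp
          · rwa [show x = ep by omega]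
        exact Or.inr (Or.inl ⟨V, mem_nonChainByGap.2 ⟨⟨hV, hVC⟩, hprefixV, e, heV, he⟩, hVV'.ne⟩)
    · have := ne_of_mem_of_not_mem hyV hpV
      exact Or.inl ⟨V, mem_nonChainByGap.2
        ⟨⟨hV, notMem_Cflat_of_lt hyV hpV (by omega)⟩, hprefix, ep, hpV, hep⟩⟩
  · obtain ⟨x, hxp, hxV⟩ := not_forall₂.1 hprefix
    exact Or.inr (Or.inr (Or.inr ⟨V, mem_nonChainByMax_add_two_of_ssubset hF.1 hC hmax hV hV' hVV'
      heV' he hxV hxp hyV (by omega), hVV'.ne⟩))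

end Shackle

section Weight

variable {F : Finset (Finset (Fin n))} {p : ℕ}

lemma three_le_nonChainWeight_add (hF : Saturated2C2 F) (hC : Cflat n ⊆ F)
    {V' Q : Finset (Fin n)} (hV' : V' ∈ nonChainByGap F (p + 1))
    (hQ : Q ∈ nonChainByMax F (p + 2)) (hQV' : Q ≠ V') :
    3 ≤ nonChainWeight F (p + 1) + nonChainWeight F (p + 2) := by
  have hp : p + 2 < n := by
    obtain ⟨x, -, hx⟩ := (mem_nonChainByMax.1 hQ).2.2
    omega
  have hgap : 1 ≤ #(nonChainByGap F (p + 1)) := card_pos.2 ⟨V', hV'⟩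
  have hmax : 1 ≤ #(nonChainByMax F (p + 2)) := card_pos.2 ⟨Q, hQ⟩
  simp only [nonChainWeight]
  by_cases hM : (nonChainByMax F (p + 1)).Nonempty
  · have := card_pos.2 hM
    omega
  by_cases hS : shackle n (p + 2) ∈ F
  · rcases eq_or_ne (shackle n (p + 2)) V' with hSV' | hSV'
    · have : 1 < #(nonChainByMax F (p + 2)) :=
        one_lt_card.2 ⟨Q, hQ, V', hSV' ▸ shackle_mem_nonChainByMax hp hS, hQV'⟩
      omega
    · have : 1 < #(nonChainByGap F (p + 1)) :=
        one_lt_card.2 ⟨_, shackle_mem_nonChainByGap hp hS, V', hV', hSV'⟩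
      omega
  · obtain ⟨V'', hV'', -⟩ :=
      exists_mem_nonChainByGap_succ hF hC hp (not_nonempty_iff_eq_empty.1 hM) hS
    have : 0 < #(nonChainByGap F (p + 2)) := card_pos.2 ⟨V'', hV''⟩
    omega

lemma exists_nonChainWeight_window (hF : Saturated2C2 F) (hC : Cflat n ⊆ F) (hp : p + 1 < n) :
    ∃ i, 0 < i ∧ i ≤ 3 ∧ i ≤ ∑ q ∈ Ico p (p + i), nonChainWeight F q := by
  suffices 1 ≤ nonChainWeight F p ∨ 2 ≤ nonChainWeight F p + nonChainWeight F (p + 1) ∨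
      3 ≤ nonChainWeight F p + nonChainWeight F (p + 1) + nonChainWeight F (p + 2) by
    rcases this with h | h | h
    · exact ⟨1, by simpa⟩
    · exact ⟨2, by simpa [sum_Ico_eq_sum_range, sum_range_succ]⟩
    · exact ⟨3, by simpa [sum_Ico_eq_sum_range, sum_range_succ]⟩
  simp only [nonChainWeight]
  by_cases hM : (nonChainByMax F p).Nonempty
  · exact Or.inl (le_add_left (card_pos.2 hM))
  by_cases hS : shackle n (p + 1) ∈ F
  · exact Or.inl (le_add_right (card_pos.2 ⟨_, shackle_mem_nonChainByGap hp hS⟩))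
  obtain ⟨V', hV', h | ⟨V, hV, hVV'⟩ | h | ⟨Q, hQ, hQV'⟩⟩ :=
    exists_mem_nonChainByGap_succ hF hC hp (not_nonempty_iff_eq_empty.1 hM) hS
  · exact Or.inl (le_add_right (card_pos.2 h))
  · have := one_lt_card.2 ⟨V, hV, V', hV', hVV'⟩
    omega
  · have := card_pos.2 h
    have := card_pos.2 ⟨V', hV'⟩
    omega
  · have := three_le_nonChainWeight_add hF hC hV' hQ hQV'
    simp only [nonChainWeight] at this
    omega

end Weight

/-- If `F` is induced-`2C₂`-saturated and contains the maximal chain `C♭`,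
then the number `k` of non-chain elements satisfies `n - 1 ≤ 2k`. -/
theorem non_chain_count (n : ℕ)
    (F : Finset (Finset (Fin n))) (hF : Saturated2C2 F) (hC : Cflat n ⊆ F) :
    n - 1 ≤ 2 * (F \ Cflat n).card :=
  calc n - 1 ≤ ∑ p ∈ range (n - 1 + 2), nonChainWeight F p :=
        le_sum_range_of_forall_window _ fun _ hp => exists_nonChainWeight_window hF hC (by omega)
    _ ≤ 2 * #(F \ Cflat n) := sum_nonChainWeight_le _
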